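/- arXiv:2504.04518 — 4 statements merged into one kernel-verified Lean document; each statement's English description precedes it below -/
import Mathlib

section
/- Let λ > 0, let X be distributed as ZTP(λ), and let X* be independent of X with the size-biased distribution P*_λ(k) = e^{−λ} λ^{k−1}/(k−1)! for k = 1, 2, …. Then P(X < X*) = 1 − (e^{−λ}/(1 − e^{−λ})) · ∫₀^λ I₀(2√(λt)) e^{−t} dt. -/
/-!
Let `q k = e^{-λ} λ^k / k!` and let `N, N'` be independent Poisson(λ) variables. The ZTP
weights are `q k / (1 - e^{-λ})` for `k ≥ 1` and `X* - 1` is Poisson(λ), so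
`P(X* ≤ X) = P(N' < N) / (1 - e^{-λ})`. By symmetry
`P(N' < N) = P(N' > N) = ∑ₖ q k P(N > k)`; analytically, `∑ₖ q k (P(N' < k) + P(N' ≤ k)) = 1`
because its partial sums are the squares `P(N < n)²`.

On the other side, `I₀(2√(λt)) e^{-t} = ∑ₖ (λ^k / k!) e^{-t} t^k / k!`, and
`∫₀^λ e^{-t} t^k / k! dt = P(N > k)` since `d/dλ P(Po(λ) ≤ k) = -e^{-λ} λ^k / k!`.
Integrating termwise, `e^{-λ} ∫₀^λ I₀(2√(λt)) e^{-t} dt = ∑ₖ q k P(N > k)` as well.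
-/

open MeasureTheory ProbabilityTheory Real Filter

/-- Modified Bessel function of the first kind of order 0, via its power series. -/
noncomputable def besselI0 (z : ℝ) : ℝ :=
  ∑' k : ℕ, (z / 2) ^ (2 * k) / ((Nat.factorial k : ℝ)) ^ 2

/-- Modified Bessel function of the first kind of order 1, via its power series. -/
noncomputable def besselI1 (z : ℝ) : ℝ :=
  (z / 2) * ∑' k : ℕ, (z / 2) ^ (2 * k) / ((Nat.factorial k : ℝ) * (Nat.factorial (k + 1) : ℝ))

/-- Probability mass function of the zero-truncated Poisson distribution ZTP(λ). -/
noncomputable def ztpPmf (lam : ℝ) (k : ℕ) : ℝ :=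
  if k = 0 then 0
  else Real.exp (-lam) * lam ^ k / ((1 - Real.exp (-lam)) * (Nat.factorial k : ℝ))

/-- Probability mass function of the size-biased distribution associated with ZTP(λ). -/
noncomputable def sizeBiasedPmf (lam : ℝ) (k : ℕ) : ℝ :=
  if k = 0 then 0
  else Real.exp (-lam) * lam ^ (k - 1) / (Nat.factorial (k - 1) : ℝ)

/-- Laplace transform of the ZTP(λ) distribution. -/
noncomputable def ztpLaplace (lam x : ℝ) : ℝ :=
  (Real.exp (-lam) / (1 - Real.exp (-lam))) * (Real.exp (lam * Real.exp (-x)) - 1)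

open Finset
open scoped Nat

-- Mathlib's `poissonMeasure` takes its rate in `ℝ≥0`; a real rate lets us differentiate and
-- integrate in it.
noncomputable def poissonPmf (lam : ℝ) (n : ℕ) : ℝ :=
  exp (-lam) * lam ^ n / n !

lemma hasSum_poissonPmf (lam : ℝ) : HasSum (poissonPmf lam) 1 := by
  have h := (NormedSpace.expSeries_div_hasSum_exp lam).mul_left (exp (-lam))
  rw [← exp_eq_exp_ℝ, ← exp_add, neg_add_cancel, exp_zero] at h
  simp only [← mul_div_assoc] at h
  exact h

lemma poissonPmf_nonneg {lam : ℝ} (hlam : 0 ≤ lam) (n : ℕ) : 0 ≤ poissonPmf lam n := by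
  unfold poissonPmf; positivity

lemma poissonPmf_le_one {lam : ℝ} (hlam : 0 ≤ lam) (n : ℕ) : poissonPmf lam n ≤ 1 :=
  le_hasSum (hasSum_poissonPmf lam) n fun j _ => poissonPmf_nonneg hlam j

lemma continuous_poissonPmf (n : ℕ) : Continuous fun t => poissonPmf t n := by
  unfold poissonPmf; fun_prop

lemma hasDerivAt_poissonPmf_succ (n : ℕ) (t : ℝ) :
    HasDerivAt (fun t => poissonPmf t (n + 1)) (poissonPmf t n - poissonPmf t (n + 1)) t := by
  refine (((hasDerivAt_neg' t).exp.fun_mul (hasDerivAt_pow (n + 1) t)).div_const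
    ((n + 1)! : ℝ)).congr_deriv ?_
  simp only [poissonPmf, Nat.factorial_succ, Nat.cast_mul, Nat.add_sub_cancel]
  field_simp
  ring

lemma hasDerivAt_sum_range_poissonPmf (k : ℕ) (t : ℝ) :
    HasDerivAt (fun t => ∑ j ∈ range (k + 1), poissonPmf t j) (-poissonPmf t k) t := by
  induction k with
  | zero => simpa [poissonPmf] using (hasDerivAt_neg' t).exp
  | succ k ih =>
    simp only [sum_range_succ _ (k + 1)]
    exact (ih.fun_add (hasDerivAt_poissonPmf_succ k t)).congr_deriv (by ring)

lemma integral_poissonPmf (k : ℕ) (x : ℝ) :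
    ∫ t in (0 : ℝ)..x, poissonPmf t k = 1 - ∑ j ∈ range (k + 1), poissonPmf x j := by
  have hderiv (t : ℝ) (_ : t ∈ Set.uIcc 0 x) :
      HasDerivAt (fun t => -∑ j ∈ range (k + 1), poissonPmf t j) (poissonPmf t k) t := by
    simpa using (hasDerivAt_sum_range_poissonPmf k t).fun_neg
  have hzero : ∑ j ∈ range (k + 1), poissonPmf 0 j = 1 := by
    simp [sum_range_succ', poissonPmf]
  rw [intervalIntegral.integral_eq_sub_of_hasDerivAt hderiv
    ((continuous_poissonPmf k).intervalIntegrable _ _), hzero]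
  ring

lemma hasSum_mul_sum_range_add_sum_range_succ {q : ℕ → ℝ} {s : ℝ} (hq : ∀ k, 0 ≤ q k)
    (hs : HasSum q s) :
    HasSum (fun k => q k * (∑ j ∈ range k, q j + ∑ j ∈ range (k + 1), q j)) (s ^ 2) := by
  have hpartial (n : ℕ) :
      ∑ k ∈ range n, q k * (∑ j ∈ range k, q j + ∑ j ∈ range (k + 1), q j)
        = (∑ j ∈ range n, q j) ^ 2 := by
    refine sum_range_induction _ (fun n => (∑ j ∈ range n, q j) ^ 2) (by simp) n fun k _ => ?_
    rw [sum_range_succ]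
    ring
  have hnonneg (k : ℕ) : 0 ≤ q k * (∑ j ∈ range k, q j + ∑ j ∈ range (k + 1), q j) :=
    mul_nonneg (hq k) (add_nonneg (sum_nonneg fun j _ => hq j) (sum_nonneg fun j _ => hq j))
  rw [hasSum_iff_tendsto_nat_of_nonneg hnonneg]
  simpa only [hpartial] using hs.tendsto_sum_nat.pow 2

lemma tsum_mul_sum_range_eq_tsum_mul_sub {q : ℕ → ℝ} {s : ℝ} (hq : ∀ k, 0 ≤ q k)
    (hs : HasSum q s) :
    ∑' k, q k * ∑ j ∈ range k, q j = ∑' k, q k * (s - ∑ j ∈ range (k + 1), q j) := by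
  have hsummable (n : ℕ → ℕ) : Summable fun k => q k * ∑ j ∈ range (n k), q j :=
    (hs.summable.mul_right s).of_nonneg_of_le
      (fun k => mul_nonneg (hq k) (sum_nonneg fun j _ => hq j))
      (fun k => mul_le_mul_of_nonneg_left (sum_le_hasSum _ (fun j _ => hq j) hs) (hq k))
  have hbelow : Summable fun k => q k * ∑ j ∈ range k, q j := hsummable id
  have hupto : Summable fun k => q k * ∑ j ∈ range (k + 1), q j := hsummable (· + 1)
  have hpair := (hasSum_mul_sum_range_add_sum_range_succ hq hs).tsum_eq
  simp only [mul_add] at hpair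
  rw [hbelow.tsum_add hupto] at hpair
  simp only [mul_sub]
  rw [(hs.summable.mul_right s).tsum_sub hupto, tsum_mul_right, hs.tsum_eq]
  linarith

lemma besselI0_two_mul_sqrt {x : ℝ} (hx : 0 ≤ x) :
    besselI0 (2 * √x) = ∑' k : ℕ, x ^ k / (k ! : ℝ) ^ 2 := by
  refine tsum_congr fun k => ?_
  rw [mul_div_cancel_left₀ _ two_ne_zero, pow_mul, sq_sqrt hx]

lemma hasSum_besselI0_mul_exp_neg {lam t : ℝ} (hlam : 0 ≤ lam) (ht : 0 ≤ t) :
    HasSum (fun k => lam ^ k / k ! * poissonPmf t k) (besselI0 (2 * √(lam * t)) * exp (-t)) := by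
  have hsummable : Summable fun k => lam ^ k / k ! * poissonPmf t k :=
    (Real.summable_pow_div_factorial lam).of_nonneg_of_le
      (fun k => mul_nonneg (by positivity) (poissonPmf_nonneg ht k))
      (fun k => mul_le_of_le_one_right (by positivity) (poissonPmf_le_one ht k))
  convert hsummable.hasSum using 1
  rw [besselI0_two_mul_sqrt (mul_nonneg hlam ht), ← tsum_mul_right]
  refine tsum_congr fun k => ?_
  rw [poissonPmf, mul_pow]
  ring

lemma exp_neg_mul_integral_besselI0_mul_exp_neg {lam : ℝ} (hlam : 0 ≤ lam) :
    exp (-lam) * ∫ t in (0 : ℝ)..lam, besselI0 (2 * √(lam * t)) * exp (-t)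
      = ∑' k, poissonPmf lam k * (1 - ∑ j ∈ range (k + 1), poissonPmf lam j) := by
  have hsum : HasSum (fun k => ∫ t in (0 : ℝ)..lam, lam ^ k / k ! * poissonPmf t k)
      (∫ t in (0 : ℝ)..lam, besselI0 (2 * √(lam * t)) * exp (-t)) := by
    refine intervalIntegral.hasSum_integral_of_dominated_convergence (fun k _ => lam ^ k / k !)
      (fun k => (continuous_const.mul (continuous_poissonPmf k)).aestronglyMeasurable)
      (fun k => ae_of_all _ fun t ht => ?_)
      (ae_of_all _ fun _ _ => Real.summable_pow_div_factorial lam) intervalIntegrable_const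
      (ae_of_all _ fun t ht => ?_)
    · rw [Set.uIoc_of_le hlam] at ht
      rw [Real.norm_of_nonneg (mul_nonneg (by positivity) (poissonPmf_nonneg ht.1.le k))]
      exact mul_le_of_le_one_right (by positivity) (poissonPmf_le_one ht.1.le k)
    · rw [Set.uIoc_of_le hlam] at ht
      exact hasSum_besselI0_mul_exp_neg hlam ht.1.le
  rw [← hsum.tsum_eq, ← tsum_mul_left]
  refine tsum_congr fun k => ?_
  rw [intervalIntegral.integral_const_mul, integral_poissonPmf, poissonPmf]
  ring

lemma ProbabilityTheory.IndepFun.measure_setOf_le_eq_tsum {Ω : Type*} [MeasurableSpace Ω]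
    {μ : Measure Ω} {X Y : Ω → ℕ} (hX : Measurable X) (hY : Measurable Y)
    (hXY : IndepFun X Y μ) :
    μ {ω | Y ω ≤ X ω} = ∑' k, μ (X ⁻¹' {k}) * ∑ m ∈ range (k + 1), μ (Y ⁻¹' {m}) := by
  have hunion : {ω | Y ω ≤ X ω} = ⋃ k, X ⁻¹' {k} ∩ Y ⁻¹' ↑(range (k + 1)) := by
    ext ω
    simp
  rw [hunion, measure_iUnion]
  · refine tsum_congr fun k => ?_
    rw [hXY.measure_inter_preimage_eq_mul _ _ (measurableSet_singleton k)
      (Finset.measurableSet _), sum_measure_preimage_singleton _ fun m _ => hY (.singleton m)]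
  · exact (pairwise_disjoint_fiber X).mono fun i j h =>
      h.mono Set.inter_subset_left Set.inter_subset_left
  · exact fun k => (hX (.singleton k)).inter (hY (Finset.measurableSet _))

lemma ProbabilityTheory.IndepFun.toReal_measure_setOf_le_eq_tsum {Ω : Type*}
    [MeasurableSpace Ω] {μ : Measure Ω} {X Y : Ω → ℕ} (hX : Measurable X) (hY : Measurable Y)
    (hXY : IndepFun X Y μ) {p q : ℕ → ℝ} (hp : ∀ k, 0 ≤ p k) (hq : ∀ k, 0 ≤ q k)
    (hpX : ∀ k, μ (X ⁻¹' {k}) = ENNReal.ofReal (p k))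
    (hqY : ∀ k, μ (Y ⁻¹' {k}) = ENNReal.ofReal (q k)) :
    (μ {ω | Y ω ≤ X ω}).toReal = ∑' k, p k * ∑ m ∈ range (k + 1), q m := by
  have hterm (k : ℕ) : μ (X ⁻¹' {k}) * ∑ m ∈ range (k + 1), μ (Y ⁻¹' {m})
      = ENNReal.ofReal (p k * ∑ m ∈ range (k + 1), q m) := by
    simp only [hpX, hqY, ENNReal.ofReal_mul (hp k), ENNReal.ofReal_sum_of_nonneg fun m _ => hq m]
  rw [hXY.measure_setOf_le_eq_tsum hX hY, tsum_congr hterm,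
    ENNReal.tsum_toReal_eq fun _ => ENNReal.ofReal_ne_top]
  exact tsum_congr fun k => ENNReal.toReal_ofReal
    (mul_nonneg (hp k) (sum_nonneg fun m _ => hq m))

lemma ztpPmf_nonneg {lam : ℝ} (hlam : 0 ≤ lam) (k : ℕ) : 0 ≤ ztpPmf lam k := by
  have : 0 ≤ 1 - exp (-lam) := by
    simpa using exp_le_one_iff.mpr (neg_nonpos.mpr hlam)
  unfold ztpPmf
  split_ifs <;> positivity

lemma sizeBiasedPmf_nonneg {lam : ℝ} (hlam : 0 ≤ lam) (k : ℕ) :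
    0 ≤ sizeBiasedPmf lam k := by
  unfold sizeBiasedPmf
  split_ifs <;> positivity

lemma sum_range_succ_sizeBiasedPmf (lam : ℝ) (k : ℕ) :
    ∑ m ∈ range (k + 1), sizeBiasedPmf lam m = ∑ j ∈ range k, poissonPmf lam j := by
  simp [sum_range_succ', sizeBiasedPmf, poissonPmf, mul_div_assoc]

lemma ztpPmf_mul_sum_range_succ_sizeBiasedPmf (lam : ℝ) (k : ℕ) :
    ztpPmf lam k * ∑ m ∈ range (k + 1), sizeBiasedPmf lam m
      = (1 - exp (-lam))⁻¹ * (poissonPmf lam k * ∑ j ∈ range k, poissonPmf lam j) := by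
  rw [sum_range_succ_sizeBiasedPmf]
  rcases eq_or_ne k 0 with rfl | hk
  · simp
  · rw [ztpPmf, if_neg hk, poissonPmf, div_eq_mul_inv, mul_inv]
    ring

/-- For X ~ ZTP(λ) and X* independent with the associated size-biased distribution,
P(X < X*) = 1 − (e^{−λ}/(1 − e^{−λ})) ∫₀^λ I₀(2√(λt)) e^{−t} dt. -/
theorem prob_lt_sizeBiased_ZTP
    {Ω : Type*} [MeasurableSpace Ω] (μ : Measure Ω) [IsProbabilityMeasure μ]
    (lam : ℝ) (hlam : 0 < lam)
    (X Xs : Ω → ℕ) (hX : Measurable X) (hXs : Measurable Xs)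
    (hindep : IndepFun X Xs μ)
    (hdX : ∀ k : ℕ, μ (X ⁻¹' {k}) = ENNReal.ofReal (ztpPmf lam k))
    (hdXs : ∀ k : ℕ, μ (Xs ⁻¹' {k}) = ENNReal.ofReal (sizeBiasedPmf lam k)) :
    (μ {ω | X ω < Xs ω}).toReal
      = 1 - (Real.exp (-lam) / (1 - Real.exp (-lam))) *
            (∫ t in (0 : ℝ)..lam, besselI0 (2 * Real.sqrt (lam * t)) * Real.exp (-t)) := by
  have hcompl : (μ {ω | X ω < Xs ω}).toReal = 1 - (μ {ω | Xs ω ≤ X ω}).toReal := by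
    have hset : {ω | X ω < Xs ω} = {ω | Xs ω ≤ X ω}ᶜ := by
      ext ω
      simp
    rw [hset]
    exact probReal_compl_eq_one_sub (measurableSet_le hXs hX)
  have hle : (μ {ω | Xs ω ≤ X ω}).toReal = (1 - exp (-lam))⁻¹ *
      ∑' k, poissonPmf lam k * (1 - ∑ j ∈ range (k + 1), poissonPmf lam j) := by
    rw [hindep.toReal_measure_setOf_le_eq_tsum hX hXs (ztpPmf_nonneg hlam.le)
        (sizeBiasedPmf_nonneg hlam.le) hdX hdXs,
      tsum_congr (ztpPmf_mul_sum_range_succ_sizeBiasedPmf lam), tsum_mul_left,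
      tsum_mul_sum_range_eq_tsum_mul_sub (poissonPmf_nonneg hlam.le) (hasSum_poissonPmf lam)]
  rw [hcompl, hle, ← exp_neg_mul_integral_besselI0_mul_exp_neg hlam.le]
  ring
end

section
/- Let λ > 0, x > 0 and ε > 0. Then ∑_{k=1}^∞ e^{−kx} · (e^{−λ}/(1 − e^{−λ})) · ( e^{λ e^{−x}} · Γ(εk, λ e^{−x}) / Γ(εk) − 1 ) · e^{−λ} λ^{k−1}/(k−1)! = (e^{−2λ}/(1 − e^{−λ})) · e^{λ e^{−x} − x} · ( ∫_{λ e^{−x}}^∞ ( ∑_{k=0}^∞ ( t^{ε(k+1)−1} / Γ(ε(k+1)) ) · (λ e^{−x})^k / k! ) e^{−t} dt − 1 ), where Γ(s) is the gamma function and Γ(s, a) = ∫_a^∞ t^{s−1} e^{−t} dt is the upper incomplete gamma function. -/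
open MeasureTheory ProbabilityTheory Real Filter

/-- Upper incomplete gamma function Γ(s, a) = ∫_a^∞ t^{s−1} e^{−t} dt. -/
noncomputable def upperGamma (s a : ℝ) : ℝ :=
  ∫ t in Set.Ioi a, t ^ (s - 1) * Real.exp (-t)

lemma ig_tail {s a : ℝ} (hs : 0 < s) (ha : 0 ≤ a) :
    IntegrableOn (fun t : ℝ => t ^ (s - 1) * Real.exp (-t)) (Set.Ioi a) := by
  have h := (Real.GammaIntegral_convergent hs).mono_set (Set.Ioi_subset_Ioi ha)
  exact h.congr_fun (fun t ht => by ring) measurableSet_Ioi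

lemma upperGamma_nonneg {s a : ℝ} (ha : 0 ≤ a) : 0 ≤ upperGamma s a := by
  apply setIntegral_nonneg measurableSet_Ioi
  intro t ht
  have ht0 : 0 < t := lt_of_le_of_lt ha ht
  positivity

lemma upperGamma_le_Gamma {s a : ℝ} (hs : 0 < s) (ha : 0 ≤ a) :
    upperGamma s a ≤ Real.Gamma s := by
  rw [Real.Gamma_eq_integral hs]
  have h1 : (∫ t in Set.Ioi (0:ℝ), Real.exp (-t) * t ^ (s-1))
      = ∫ t in Set.Ioi (0:ℝ), t ^ (s - 1) * Real.exp (-t) := by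
    apply setIntegral_congr_fun measurableSet_Ioi
    intro t _; ring
  rw [h1]
  apply setIntegral_mono_set (ig_tail hs le_rfl)
  · filter_upwards [ae_restrict_mem measurableSet_Ioi] with t ht
    have : (0:ℝ) < t := ht
    positivity
  · exact HasSubset.Subset.eventuallyLE (Set.Ioi_subset_Ioi ha)

lemma exp_tsum (y : ℝ) : ∑' k : ℕ, y ^ k / (Nat.factorial k : ℝ) = Real.exp y := by
  rw [Real.exp_eq_exp_ℝ, NormedSpace.exp_eq_tsum_div]


/-- E[e^{−xX*} H(x, εX*)] for size-biased X*:
∑_{k=1}^∞ e^{−kx} (e^{−λ}/(1−e^{−λ})) ( e^{λe^{−x}} Γ(εk, λe^{−x})/Γ(εk) − 1 ) e^{−λ} λ^{k−1}/(k−1)!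
  = (e^{−2λ}/(1−e^{−λ})) e^{λe^{−x}−x}
      ( ∫_{λe^{−x}}^∞ ( ∑_{k=0}^∞ (t^{ε(k+1)−1}/Γ(ε(k+1))) (λe^{−x})^k/k! ) e^{−t} dt − 1 ).
(The sum on the left is written with the index shifted so that it runs over k ∈ ℕ,
the term of index k corresponding to the term k+1 of the original sum.) -/
theorem expectation_H_sizeBiased (lam x eps : ℝ) (hlam : 0 < lam) (hx : 0 < x)
    (heps : 0 < eps) :
    ∑' k : ℕ, Real.exp (-(((k : ℝ) + 1) * x)) *
        ((Real.exp (-lam) / (1 - Real.exp (-lam))) *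
          (Real.exp (lam * Real.exp (-x)) *
              upperGamma (eps * ((k : ℝ) + 1)) (lam * Real.exp (-x)) /
              Real.Gamma (eps * ((k : ℝ) + 1)) - 1)) *
        (Real.exp (-lam) * lam ^ k / (Nat.factorial k : ℝ))
      = (Real.exp (-2 * lam) / (1 - Real.exp (-lam))) *
          Real.exp (lam * Real.exp (-x) - x) *
          ((∫ t in Set.Ioi (lam * Real.exp (-x)),
              (∑' k : ℕ, t ^ (eps * ((k : ℝ) + 1) - 1) / Real.Gamma (eps * ((k : ℝ) + 1)) *
                ((lam * Real.exp (-x)) ^ k / (Nat.factorial k : ℝ))) * Real.exp (-t)) - 1) := by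
  set μ : ℝ := lam * Real.exp (-x) with hμdef
  have hμ : 0 < μ := by positivity
  set s : ℕ → ℝ := fun k => eps * ((k : ℝ) + 1) with hsdef
  have hs : ∀ k, 0 < s k := fun k => by positivity
  have hΓ : ∀ k, 0 < Real.Gamma (s k) := fun k => Real.Gamma_pos_of_pos (hs k)
  set g : ℕ → ℝ := fun k => upperGamma (s k) μ / Real.Gamma (s k) *
      (μ ^ k / (Nat.factorial k : ℝ)) with hgdef
  have hg_nonneg : ∀ k, 0 ≤ g k := by
    intro k
    have h1 := upperGamma_nonneg (s := s k) hμ.le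
    have h2 := (hΓ k).le
    have : (0:ℝ) ≤ μ ^ k / (Nat.factorial k : ℝ) := by positivity
    exact mul_nonneg (div_nonneg h1 h2) this
  have hg_le : ∀ k, g k ≤ μ ^ k / (Nat.factorial k : ℝ) := by
    intro k
    have h1 : upperGamma (s k) μ / Real.Gamma (s k) ≤ 1 :=
      (div_le_one (hΓ k)).mpr (upperGamma_le_Gamma (hs k) hμ.le)
    have h2 : (0:ℝ) ≤ μ ^ k / (Nat.factorial k : ℝ) := by positivity
    calc g k ≤ 1 * (μ ^ k / (Nat.factorial k : ℝ)) := mul_le_mul_of_nonneg_right h1 h2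
      _ = _ := one_mul _
  have hsum_exp : Summable (fun k : ℕ => μ ^ k / (Nat.factorial k : ℝ)) :=
    Real.summable_pow_div_factorial μ
  have hsum_g : Summable g := Summable.of_nonneg_of_le hg_nonneg hg_le hsum_exp
  -- the key swap
  set F : ℕ → ℝ → ℝ := fun k t => t ^ (s k - 1) * Real.exp (-t) *
      ((μ ^ k / (Nat.factorial k : ℝ)) / Real.Gamma (s k)) with hFdef
  have hF_int : ∀ k, Integrable (F k) (volume.restrict (Set.Ioi μ)) := fun k =>
    (ig_tail (hs k) hμ.le).mul_const _
  have hF_eval : ∀ k, (∫ t in Set.Ioi μ, F k t) = g k := by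
    intro k
    rw [hFdef]
    simp only
    rw [integral_mul_const]
    rw [hgdef]
    simp only [upperGamma]
    ring
  have hF_nonneg : ∀ k, ∀ t ∈ Set.Ioi μ, 0 ≤ F k t := by
    intro k t ht
    have ht0 : 0 < t := lt_trans hμ ht
    have := (hΓ k).le
    have h2 : (0:ℝ) ≤ μ ^ k / (Nat.factorial k : ℝ) := by positivity
    rw [hFdef]
    positivity
  have hF_norm : ∀ k, (∫ t in Set.Ioi μ, ‖F k t‖) = g k := by
    intro k
    rw [← hF_eval k]
    apply setIntegral_congr_fun measurableSet_Ioi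
    intro t ht
    exact Real.norm_of_nonneg (hF_nonneg k t ht)
  have hF_sum : Summable (fun k => ∫ t in Set.Ioi μ, ‖F k t‖) := by
    simp_rw [hF_norm]; exact hsum_g
  have hswap : (∫ t in Set.Ioi μ,
      (∑' k : ℕ, t ^ (s k - 1) / Real.Gamma (s k) *
        (μ ^ k / (Nat.factorial k : ℝ))) * Real.exp (-t)) = ∑' k, g k := by
    have h1 := integral_tsum_of_summable_integral_norm hF_int hF_sum
    simp_rw [hF_eval] at h1
    have h2 : (∫ t in Set.Ioi μ,
        (∑' k : ℕ, t ^ (s k - 1) / Real.Gamma (s k) *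
          (μ ^ k / (Nat.factorial k : ℝ))) * Real.exp (-t))
        = ∫ t in Set.Ioi μ, ∑' k, F k t := by
      apply setIntegral_congr_fun measurableSet_Ioi
      intro t ht
      dsimp only
      rw [← tsum_mul_right]
      congr 1
      funext k
      rw [hFdef]
      ring
    rw [h2, ← h1]
  rw [hswap]
  -- now pure algebra with tsums
  set C : ℝ := Real.exp (-lam) / (1 - Real.exp (-lam)) * Real.exp (-lam) * Real.exp (-x)
    with hCdef
  have hterm : ∀ k : ℕ, Real.exp (-(((k : ℝ) + 1) * x)) *
        ((Real.exp (-lam) / (1 - Real.exp (-lam))) *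
          (Real.exp μ * upperGamma (s k) μ / Real.Gamma (s k) - 1)) *
        (Real.exp (-lam) * lam ^ k / (Nat.factorial k : ℝ))
      = C * Real.exp μ * g k - C * (μ ^ k / (Nat.factorial k : ℝ)) := by
    intro k
    have hexp : Real.exp (-(((k : ℝ) + 1) * x)) = Real.exp (-x) * (Real.exp (-x)) ^ k := by
      rw [← Real.exp_nat_mul, ← Real.exp_add]
      ring_nf
    have hμk : lam ^ k * (Real.exp (-x)) ^ k = μ ^ k := by
      rw [hμdef, mul_pow]
    have h1me : (1 : ℝ) - Real.exp (-lam) ≠ 0 := by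
      have h : Real.exp (-lam) < 1 := by
        rw [Real.exp_lt_one_iff]; linarith
      linarith
    have hfac : ((Nat.factorial k : ℝ)) ≠ 0 := by positivity
    have hΓne : Real.Gamma (s k) ≠ 0 := (hΓ k).ne'
    rw [hexp, hCdef, hgdef]
    simp only
    rw [hμdef, mul_pow]
    field_simp
  rw [tsum_congr hterm]
  rw [Summable.tsum_sub ((hsum_g.mul_left _)) (hsum_exp.mul_left C)]
  rw [tsum_mul_left, tsum_mul_left, exp_tsum]
  have hC2 : Real.exp (-2 * lam) / (1 - Real.exp (-lam)) * Real.exp (μ - x)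
      = C * Real.exp μ := by
    rw [hCdef]
    rw [Real.exp_sub, show (-2:ℝ) * lam = -lam + -lam by ring, Real.exp_add,
      Real.exp_neg x]
    ring
  rw [hC2]
  ring
end

section
/- Let λ > 0 and x > 0. Then the limit as ε → 1 of ∑_{k=1}^∞ e^{−kx} · (e^{−λ}/(1 − e^{−λ})) · ( e^{λ e^{−x}} · Γ(εk, λ e^{−x}) / Γ(εk) − 1 ) · e^{−λ} λ^{k−1}/(k−1)! equals (e^{−2λ}/(1 − e^{−λ})) · e^{λ e^{−x} − x} · ( ∫_{λ e^{−x}}^∞ I₀(2√(λ e^{−x} t)) e^{−t} dt − 1 ). -/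
open MeasureTheory ProbabilityTheory Real Filter

lemma upperGamma_integrableOn {s a : ℝ} (hs : 0 < s) (ha : 0 ≤ a) :
    MeasureTheory.IntegrableOn (fun t : ℝ => t ^ (s - 1) * Real.exp (-t)) (Set.Ioi a) := by
  have h2 : MeasureTheory.IntegrableOn (fun t : ℝ => t ^ (s - 1) * Real.exp (-t)) (Set.Ioi 0) := by
    simpa [mul_comm] using Real.GammaIntegral_convergent hs
  exact h2.mono_set (Set.Ioi_subset_Ioi ha)

lemma continuousAt_upperGamma {a s₀ : ℝ} (ha : 0 < a) (hs₀ : 0 < s₀) :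
    ContinuousAt (fun s => upperGamma s a) s₀ := by
  have hmem : Set.Ioo (s₀ / 2) (s₀ + 1) ∈ nhds s₀ :=
    Ioo_mem_nhds (by linarith) (by linarith)
  apply continuousAt_of_dominated (bound := fun t =>
      (t ^ (s₀ / 2 - 1) + t ^ (s₀ + 1 - 1)) * Real.exp (-t))
  · filter_upwards with s
    apply ContinuousOn.aestronglyMeasurable _ measurableSet_Ioi
    apply ContinuousOn.mul _ (Continuous.continuousOn (by fun_prop))
    intro t ht
    exact (continuousAt_rpow_const t _ (Or.inl (ne_of_gt (lt_trans ha ht)))).continuousWithinAt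
  · filter_upwards [hmem] with s hs
    filter_upwards [ae_restrict_mem measurableSet_Ioi] with t ht
    have ht0 : 0 < t := lt_trans ha ht
    rw [norm_mul, Real.norm_of_nonneg (Real.rpow_nonneg ht0.le _),
      Real.norm_of_nonneg (Real.exp_pos _).le]
    apply mul_le_mul_of_nonneg_right _ (Real.exp_pos _).le
    rcases le_or_gt t 1 with h1 | h1
    · have : t ^ (s - 1) ≤ t ^ (s₀ / 2 - 1) :=
        Real.rpow_le_rpow_of_exponent_ge ht0 h1 (by linarith [hs.1])
      have h2 : 0 ≤ t ^ (s₀ + 1 - 1) := Real.rpow_nonneg ht0.le _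
      linarith
    · have : t ^ (s - 1) ≤ t ^ (s₀ + 1 - 1) :=
        Real.rpow_le_rpow_of_exponent_le h1.le (by linarith [hs.2])
      have h2 : 0 ≤ t ^ (s₀ / 2 - 1) := Real.rpow_nonneg ht0.le _
      linarith
  · have := (upperGamma_integrableOn (s := s₀ / 2) (by linarith) ha.le).add
      (upperGamma_integrableOn (s := s₀ + 1) (by linarith) ha.le)
    exact this.congr (Filter.Eventually.of_forall (fun t => by simp [add_mul]))
  · filter_upwards [ae_restrict_mem measurableSet_Ioi] with t ht
    have ht0 : 0 < t := lt_trans ha ht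
    have : (fun s => t ^ (s - 1) * Real.exp (-t))
        = fun s => Real.exp (Real.log t * (s - 1)) * Real.exp (-t) := by
      funext s; rw [Real.rpow_def_of_pos ht0]
    rw [this]
    fun_prop

lemma eval_one (lam x : ℝ) (hlam : 0 < lam) (hx : 0 < x) :
    (∑' k : ℕ, Real.exp (-(((k : ℝ) + 1) * x)) *
          ((Real.exp (-lam) / (1 - Real.exp (-lam))) *
            (Real.exp (lam * Real.exp (-x)) *
                upperGamma ((1:ℝ) * ((k : ℝ) + 1)) (lam * Real.exp (-x)) /
                Real.Gamma ((1:ℝ) * ((k : ℝ) + 1)) - 1)) *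
          (Real.exp (-lam) * lam ^ k / (Nat.factorial k : ℝ)))
    = (Real.exp (-2 * lam) / (1 - Real.exp (-lam))) *
        Real.exp (lam * Real.exp (-x) - x) *
        ((∫ t in Set.Ioi (lam * Real.exp (-x)),
            besselI0 (2 * Real.sqrt (lam * Real.exp (-x) * t)) * Real.exp (-t)) - 1) := by
  set a := lam * Real.exp (-x) with ha_def
  have ha : 0 < a := by positivity
  have hden : 0 < 1 - Real.exp (-lam) := by
    have : Real.exp (-lam) < 1 := by rw [Real.exp_lt_one_iff]; linarith
    linarith
  set U : ℕ → ℝ := fun k => ∫ t in Set.Ioi a, t ^ k * Real.exp (-t) with hU_def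
  have hΓ : ∀ k : ℕ, Real.Gamma ((1:ℝ) * ((k:ℝ)+1)) = (Nat.factorial k : ℝ) := by
    intro k
    rw [one_mul]
    exact_mod_cast Real.Gamma_nat_eq_factorial k
  have hU : ∀ k : ℕ, upperGamma ((1:ℝ) * ((k:ℝ)+1)) a = U k := by
    intro k
    rw [one_mul]
    simp only [upperGamma, add_sub_cancel_right, Real.rpow_natCast, hU_def]
  have hUint : ∀ k : ℕ, MeasureTheory.IntegrableOn
      (fun t : ℝ => t ^ k * Real.exp (-t)) (Set.Ioi a) := by
    intro k
    have := upperGamma_integrableOn (s := (k:ℝ)+1) (a := a) (by positivity) ha.le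
    simpa only [add_sub_cancel_right, Real.rpow_natCast] using this
  have hU0 : ∀ k : ℕ, 0 ≤ U k := by
    intro k
    apply setIntegral_nonneg measurableSet_Ioi
    intro t ht
    have h0 : (0:ℝ) < t := lt_trans ha ht
    positivity
  have hUle : ∀ k : ℕ, U k ≤ (Nat.factorial k : ℝ) := by
    intro k
    have h1 := upperGamma_le_Gamma (s := (k:ℝ)+1) (a := a) (by positivity) ha.le
    have h2 : upperGamma ((k:ℝ)+1) a = U k := by
      simp only [upperGamma, add_sub_cancel_right, Real.rpow_natCast, hU_def]
    rw [h2] at h1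
    refine le_trans h1 (le_of_eq ?_)
    exact_mod_cast Real.Gamma_nat_eq_factorial k
  -- the family to be summed under the integral
  set F : ℕ → ℝ → ℝ := fun k t => a ^ k / ((Nat.factorial k : ℝ))^2 * (t ^ k * Real.exp (-t))
    with hF_def
  have hfac : ∀ k : ℕ, (0:ℝ) < (Nat.factorial k : ℝ) := fun k => by
    exact_mod_cast Nat.factorial_pos k
  have hFint : ∀ k : ℕ, MeasureTheory.Integrable (F k)
      (MeasureTheory.volume.restrict (Set.Ioi a)) := fun k => (hUint k).const_mul _
  have hFnorm : ∀ k : ℕ, (∫ t in Set.Ioi a, ‖F k t‖) = a ^ k / ((Nat.factorial k : ℝ))^2 * U k := by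
    intro k
    rw [hU_def, ← MeasureTheory.integral_const_mul]
    apply setIntegral_congr_fun measurableSet_Ioi
    intro t ht
    have h0 : (0:ℝ) < t := lt_trans ha ht
    simp only [hF_def, Real.norm_eq_abs]
    rw [abs_of_nonneg (by positivity)]
  have hS1 : Summable (fun k : ℕ => a ^ k / ((Nat.factorial k : ℝ))^2 * U k) := by
    apply Summable.of_nonneg_of_le (fun k => mul_nonneg (by positivity) (hU0 k))
      (fun k => ?_) (Real.summable_pow_div_factorial a)
    calc a ^ k / ((Nat.factorial k : ℝ))^2 * U k
        ≤ a ^ k / ((Nat.factorial k : ℝ))^2 * (Nat.factorial k : ℝ) := by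
          apply mul_le_mul_of_nonneg_left (hUle k) (by positivity)
      _ = a ^ k / (Nat.factorial k : ℝ) := by
          field_simp
  have hsumInt : Summable (fun k : ℕ => ∫ t in Set.Ioi a, ‖F k t‖) := by
    rw [funext hFnorm]; exact hS1
  have hswap : (∑' k : ℕ, ∫ t in Set.Ioi a, F k t)
      = ∫ t in Set.Ioi a, (∑' k : ℕ, F k t) :=
    MeasureTheory.integral_tsum_of_summable_integral_norm hFint hsumInt
  have hFU : ∀ k : ℕ, (∫ t in Set.Ioi a, F k t) = a ^ k / ((Nat.factorial k : ℝ))^2 * U k := by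
    intro k
    rw [hU_def, hF_def, MeasureTheory.integral_const_mul]
  have hbessel : ∀ t ∈ Set.Ioi a, (∑' k : ℕ, F k t)
      = besselI0 (2 * Real.sqrt (a * t)) * Real.exp (-t) := by
    intro t ht
    have h0 : (0:ℝ) < t := lt_trans ha ht
    have hat : (0:ℝ) ≤ a * t := by positivity
    rw [besselI0, ← tsum_mul_right]
    apply tsum_congr
    intro k
    have h1 : 2 * Real.sqrt (a * t) / 2 = Real.sqrt (a * t) := by ring
    have hfk : (Nat.factorial k : ℝ) ≠ 0 := ne_of_gt (hfac k)
    rw [h1, pow_mul, Real.sq_sqrt hat, mul_pow]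
    simp only [hF_def]
    ring
  have hJ : (∑' k : ℕ, a ^ k / ((Nat.factorial k : ℝ))^2 * U k)
      = ∫ t in Set.Ioi a, besselI0 (2 * Real.sqrt (a * t)) * Real.exp (-t) := by
    rw [← funext hFU, hswap]
    exact setIntegral_congr_fun measurableSet_Ioi hbessel
  -- expand the terms of the series
  have hexp : ∀ k : ℕ, Real.exp (-(((k:ℝ)+1) * x)) = Real.exp (-x) * Real.exp (-x) ^ k := by
    intro k
    rw [← Real.exp_nat_mul, ← Real.exp_add]
    ring_nf
  set c1 : ℝ := Real.exp (-lam) / (1 - Real.exp (-lam)) * Real.exp (-lam) * Real.exp (-x)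
      * Real.exp a with hc1_def
  have hterm : ∀ k : ℕ, Real.exp (-(((k : ℝ) + 1) * x)) *
          ((Real.exp (-lam) / (1 - Real.exp (-lam))) *
            (Real.exp a * upperGamma ((1:ℝ) * ((k : ℝ) + 1)) a /
                Real.Gamma ((1:ℝ) * ((k : ℝ) + 1)) - 1)) *
          (Real.exp (-lam) * lam ^ k / (Nat.factorial k : ℝ))
      = c1 * (a ^ k / ((Nat.factorial k : ℝ))^2 * U k)
        - (Real.exp (-lam) / (1 - Real.exp (-lam)) * Real.exp (-lam) * Real.exp (-x))
          * (a ^ k / (Nat.factorial k : ℝ)) := by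
    intro k
    rw [hΓ k, hU k, hexp k, hc1_def, ha_def]
    have h1 : (Nat.factorial k : ℝ) ≠ 0 := ne_of_gt (hfac k)
    have h2 : (1 - Real.exp (-lam)) ≠ 0 := ne_of_gt hden
    field_simp
    ring
  rw [tsum_congr hterm]
  have hS1' : Summable (fun k : ℕ => c1 * (a ^ k / ((Nat.factorial k : ℝ))^2 * U k)) :=
    hS1.mul_left c1
  have hS2 : Summable (fun k : ℕ => a ^ k / (Nat.factorial k : ℝ)) :=
    Real.summable_pow_div_factorial a
  have hS2' : Summable (fun k : ℕ =>
      (Real.exp (-lam) / (1 - Real.exp (-lam)) * Real.exp (-lam) * Real.exp (-x))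
        * (a ^ k / (Nat.factorial k : ℝ))) := hS2.mul_left _
  rw [Summable.tsum_sub hS1' hS2', tsum_mul_left, tsum_mul_left, hJ]
  have hexpa : (∑' k : ℕ, a ^ k / (Nat.factorial k : ℝ)) = Real.exp a := by
    rw [Real.exp_eq_exp_ℝ, NormedSpace.exp_eq_tsum_div]
  rw [hexpa]
  have h2lam : Real.exp (-2 * lam) = Real.exp (-lam) * Real.exp (-lam) := by
    rw [← Real.exp_add]; ring_nf
  have hax : Real.exp (a - x) = Real.exp a * Real.exp (-x) := by
    rw [← Real.exp_add]; ring_nf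
  rw [h2lam, hax, hc1_def]
  ring

/-- As ε → 1 (through ε > 0), E[e^{−xX*} H(x, εX*)] tends to
(e^{−2λ}/(1−e^{−λ})) e^{λe^{−x}−x} ( ∫_{λe^{−x}}^∞ I₀(2√(λe^{−x} t)) e^{−t} dt − 1 ).
(The sum is written with the index shifted so that it runs over k ∈ ℕ,
the term of index k corresponding to the term k+1 of the original sum.) -/
theorem limit_eps_to_one (lam x : ℝ) (hlam : 0 < lam) (hx : 0 < x) :
    Filter.Tendsto
      (fun eps : ℝ =>
        ∑' k : ℕ, Real.exp (-(((k : ℝ) + 1) * x)) *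
          ((Real.exp (-lam) / (1 - Real.exp (-lam))) *
            (Real.exp (lam * Real.exp (-x)) *
                upperGamma (eps * ((k : ℝ) + 1)) (lam * Real.exp (-x)) /
                Real.Gamma (eps * ((k : ℝ) + 1)) - 1)) *
          (Real.exp (-lam) * lam ^ k / (Nat.factorial k : ℝ)))
      (nhdsWithin 1 (Set.Ioi (0 : ℝ)))
      (nhds ((Real.exp (-2 * lam) / (1 - Real.exp (-lam))) *
        Real.exp (lam * Real.exp (-x) - x) *
        ((∫ t in Set.Ioi (lam * Real.exp (-x)),
            besselI0 (2 * Real.sqrt (lam * Real.exp (-x) * t)) * Real.exp (-t)) - 1))) := by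
  set a := lam * Real.exp (-x) with ha_def
  have ha : 0 < a := by positivity
  set C := Real.exp (-lam) / (1 - Real.exp (-lam)) with hC_def
  have hden : 0 < 1 - Real.exp (-lam) := by
    have : Real.exp (-lam) < 1 := by
      rw [Real.exp_lt_one_iff]; linarith
    linarith
  have hC : 0 < C := div_pos (Real.exp_pos _) hden
  set f : ℝ → ℕ → ℝ := fun eps k => Real.exp (-(((k : ℝ) + 1) * x)) *
          (C * (Real.exp a * upperGamma (eps * ((k : ℝ) + 1)) a /
                Real.Gamma (eps * ((k : ℝ) + 1)) - 1)) *
          (Real.exp (-lam) * lam ^ k / (Nat.factorial k : ℝ)) with hf_def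
  rw [← eval_one lam x hlam hx]
  have key : Filter.Tendsto (fun eps => ∑' k, f eps k) (nhdsWithin 1 (Set.Ioi (0 : ℝ)))
      (nhds (∑' k, f 1 k)) := by
    apply tendsto_tsum_of_dominated_convergence
      (bound := fun k : ℕ => (Real.exp (-x) * (C * Real.exp a) * Real.exp (-lam)) * (a ^ k / (Nat.factorial k : ℝ)))
    · exact (Real.summable_pow_div_factorial a).mul_left _
    · intro k
      have hk : (0:ℝ) < 1 * ((k:ℝ)+1) := by positivity
      have h1 : ContinuousAt (fun eps : ℝ => eps * ((k:ℝ)+1)) 1 := by fun_prop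
      have h2 : ContinuousAt (fun eps : ℝ => upperGamma (eps*((k:ℝ)+1)) a) 1 :=
        ContinuousAt.comp (g := fun s => upperGamma s a) (continuousAt_upperGamma ha hk) h1
      have h3 : ContinuousAt (fun eps : ℝ => Real.Gamma (eps*((k:ℝ)+1))) 1 := by
        refine ContinuousAt.comp (g := Real.Gamma) ?_ h1
        refine (Real.differentiableAt_Gamma (fun m => ?_)).continuousAt
        have hm : (0:ℝ) ≤ m := Nat.cast_nonneg m
        intro hcon
        rw [hcon] at hk
        nlinarith
      have h4 : Real.Gamma (1 * ((k:ℝ)+1)) ≠ 0 := ne_of_gt (Real.Gamma_pos_of_pos hk)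
      have : ContinuousAt (fun eps => f eps k) 1 := by
        apply ContinuousAt.mul _ continuousAt_const
        apply ContinuousAt.mul continuousAt_const
        apply ContinuousAt.mul continuousAt_const
        exact ((continuousAt_const.mul h2).div h3 h4).sub continuousAt_const
      exact this.continuousWithinAt.tendsto
    · filter_upwards [self_mem_nhdsWithin] with eps (heps : 0 < eps)
      intro k
      have hs : (0:ℝ) < eps * ((k:ℝ)+1) := by positivity
      have hΓ : 0 < Real.Gamma (eps * ((k:ℝ)+1)) := Real.Gamma_pos_of_pos hs
      have hr0 : 0 ≤ upperGamma (eps * ((k:ℝ)+1)) a / Real.Gamma (eps * ((k:ℝ)+1)) :=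
        div_nonneg (upperGamma_nonneg ha.le) hΓ.le
      have hr1 : upperGamma (eps * ((k:ℝ)+1)) a / Real.Gamma (eps * ((k:ℝ)+1)) ≤ 1 :=
        (div_le_one hΓ).mpr (upperGamma_le_Gamma hs ha.le)
      have hea : (1:ℝ) ≤ Real.exp a := Real.one_le_exp ha.le
      have hmid : |C * (Real.exp a * upperGamma (eps * ((k:ℝ)+1)) a /
          Real.Gamma (eps * ((k:ℝ)+1)) - 1)| ≤ C * Real.exp a := by
        rw [mul_div_assoc, abs_le]
        constructor
        · nlinarith [mul_nonneg hC.le (mul_nonneg (Real.exp_pos a).le hr0),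
            mul_nonneg hC.le (sub_nonneg.mpr hea)]
        · nlinarith [mul_le_mul_of_nonneg_left hr1 (mul_nonneg hC.le (Real.exp_pos a).le)]
      have hexp : Real.exp (-(((k:ℝ)+1) * x)) = Real.exp (-x) * Real.exp (-x) ^ k := by
        rw [← Real.exp_nat_mul]
        rw [← Real.exp_add]
        ring_nf
      have hnorm : ‖f eps k‖ = Real.exp (-(((k:ℝ)+1) * x)) *
          |C * (Real.exp a * upperGamma (eps * ((k:ℝ)+1)) a /
            Real.Gamma (eps * ((k:ℝ)+1)) - 1)| *
          (Real.exp (-lam) * lam ^ k / (Nat.factorial k : ℝ)) := by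
        have hA : (0:ℝ) ≤ Real.exp (-(((k:ℝ)+1)*x)) := (Real.exp_pos _).le
        have hw : (0:ℝ) ≤ Real.exp (-lam) * lam ^ k / (Nat.factorial k : ℝ) := by positivity
        rw [hf_def, Real.norm_eq_abs, abs_mul, abs_mul, abs_of_nonneg hA, abs_of_nonneg hw]
      rw [hnorm]
      have step : Real.exp (-(((k:ℝ)+1) * x)) *
          |C * (Real.exp a * upperGamma (eps * ((k:ℝ)+1)) a /
            Real.Gamma (eps * ((k:ℝ)+1)) - 1)| *
          (Real.exp (-lam) * lam ^ k / (Nat.factorial k : ℝ)) ≤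
          Real.exp (-(((k:ℝ)+1) * x)) * (C * Real.exp a) *
          (Real.exp (-lam) * lam ^ k / (Nat.factorial k : ℝ)) := by
        apply mul_le_mul_of_nonneg_right (mul_le_mul_of_nonneg_left hmid (Real.exp_pos _).le)
        positivity
      refine le_trans step (le_of_eq ?_)
      rw [hexp, ha_def, mul_pow]
      ring
  exact key
end

section
/- Let λ > 0 and let n ≥ 2 be an integer. Define L_λ(x) = (e^{−λ}/(1 − e^{−λ}))( e^{λ e^{−x}} − 1 ), P_λ(k) = e^{−λ} λ^k / ((1 − e^{−λ}) k!), and P*_λ(k) = e^{−λ} λ^{k−1}/(k−1)!. Then ∑_{k=1}^∞ ( ∫₀^∞ e^{−2kx} L_λ(x)^{n−2} dx ) · P_λ(k) · P*_λ(k) = (e^{−nλ}/(1 − e^{−λ})^{n−1}) · ∫₀^1 I₁(2λy) (e^{λy} − 1)^{n−2} dy. -/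
/-!
Substituting `y = e^{-x}` turns the Laplace integral in the `k`-th term into
`(e^{-λ}/(1-e^{-λ}))^{n-2} ∫₀¹ y^{2k-1} (e^{λy}-1)^{n-2} dy`, while
`P_λ(k) P*_λ(k) = e^{-2λ}/(1-e^{-λ}) · λ^{2k-1}/(k!(k-1)!)`. Summing over `k` and exchanging sum
and integral (dominated convergence, the series being dominated on `[0,1]` by its value at
`y = 1`) puts the series `∑ₖ (λy)^{2k-1}/(k!(k-1)!) = I₁(2λy)` under the integral.
-/

open MeasureTheory ProbabilityTheory Real Filter

open Set
open scoped Nat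

theorem image_exp_neg_Ioi_zero : (fun x : ℝ => exp (-x)) '' Ioi 0 = Ioo 0 1 := by
  ext y
  constructor
  · rintro ⟨x, hx, rfl⟩
    exact ⟨exp_pos _, exp_lt_one_iff.mpr (neg_neg_of_pos hx)⟩
  · rintro ⟨h0, h1⟩
    exact ⟨-log y, neg_pos.mpr (log_neg h0 h1), by simp [exp_log h0]⟩

theorem integral_Ioi_exp_neg_mul_comp (g : ℝ → ℝ) :
    ∫ x in Ioi 0, exp (-x) * g (exp (-x)) = ∫ y in (0 : ℝ)..1, g y := by
  have hderiv : ∀ x ∈ Ioi (0 : ℝ),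
      HasDerivWithinAt (fun x => exp (-x)) (-exp (-x)) (Ioi 0) x := fun x _ => by
    simpa using ((hasDerivAt_neg x).exp).hasDerivWithinAt
  have hinj : InjOn (fun x : ℝ => exp (-x)) (Ioi 0) := fun a _ b _ h => by
    simpa using exp_injective h
  rw [intervalIntegral.integral_of_le zero_le_one, integral_Ioc_eq_integral_Ioo,
    ← image_exp_neg_Ioi_zero,
    integral_image_eq_integral_abs_deriv_smul measurableSet_Ioi hderiv hinj g]
  simp [abs_of_pos (exp_pos _)]

theorem summable_pow_two_mul_div_factorial_mul_factorial_succ (w : ℝ) :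
    Summable fun m : ℕ => w ^ (2 * m) / (m ! * (m + 1)! : ℝ) := by
  refine .of_nonneg_of_le (fun m => by rw [pow_mul]; positivity) (fun m => ?_)
    (summable_pow_div_factorial (w ^ 2))
  have hm : (0 : ℝ) < m ! := by positivity
  have hm1 : (1 : ℝ) ≤ (m + 1)! := by exact_mod_cast (m + 1).factorial_pos
  rw [pow_mul]
  exact div_le_div_of_nonneg_left (by positivity) hm (le_mul_of_one_le_right hm.le hm1)

theorem hasSum_besselI1 (w : ℝ) :
    HasSum (fun m : ℕ => w ^ (2 * m + 1) / (m ! * (m + 1)! : ℝ)) (besselI1 (2 * w)) := by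
  rw [besselI1, mul_div_cancel_left₀ w two_ne_zero]
  simpa only [← mul_div_assoc, ← pow_succ'] using
    (summable_pow_two_mul_div_factorial_mul_factorial_succ w).hasSum.mul_left w

theorem hasSum_integral_besselI1_mul (lam : ℝ) {g : ℝ → ℝ} (hg : Continuous g) :
    HasSum (fun m : ℕ => lam ^ (2 * m + 1) / (m ! * (m + 1)! : ℝ) *
        ∫ y in (0 : ℝ)..1, y ^ (2 * m + 1) * g y)
      (∫ y in (0 : ℝ)..1, besselI1 (2 * lam * y) * g y) := by
  obtain ⟨C, hC⟩ := isCompact_Icc.exists_bound_of_continuousOn (hg.continuousOn (s := Icc 0 1))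
  have hterm (m : ℕ) : lam ^ (2 * m + 1) / (m ! * (m + 1)! : ℝ) *
        ∫ y in (0 : ℝ)..1, y ^ (2 * m + 1) * g y
      = ∫ y in (0 : ℝ)..1, (lam * y) ^ (2 * m + 1) / (m ! * (m + 1)! : ℝ) * g y := by
    rw [← intervalIntegral.integral_const_mul]
    congr 1 with y
    ring
  simp only [hterm]
  refine intervalIntegral.hasSum_integral_of_dominated_convergence
    (fun m _ => |lam| ^ (2 * m + 1) / (m ! * (m + 1)! : ℝ) * C)
    (fun m => (by fun_prop : Continuous _).aestronglyMeasurable) (fun m => ?_)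
    (.of_forall fun _ _ => (hasSum_besselI1 |lam|).summable.mul_right C) intervalIntegrable_const
    (.of_forall fun t _ => ?_)
  · refine .of_forall fun t ht => ?_
    rw [uIoc_of_le zero_le_one] at ht
    have hlt : |lam * t| ≤ |lam| := by
      rw [abs_mul]
      exact mul_le_of_le_one_right (abs_nonneg lam) (abs_le.mpr ⟨by linarith [ht.1], ht.2⟩)
    rw [norm_mul, norm_div, norm_pow, Real.norm_eq_abs, Real.norm_of_nonneg (by positivity)]
    gcongr
    exact hC t (Ioc_subset_Icc_self ht)
  · rw [mul_assoc]
    exact (hasSum_besselI1 (lam * t)).mul_right (g t)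

theorem ztpPmf_succ_mul_sizeBiasedPmf_succ (lam : ℝ) (m : ℕ) :
    ztpPmf lam (m + 1) * sizeBiasedPmf lam (m + 1)
      = exp (-lam) ^ 2 / (1 - exp (-lam)) * (lam ^ (2 * m + 1) / (m ! * (m + 1)! : ℝ)) := by
  simp only [ztpPmf, sizeBiasedPmf, add_eq_zero, one_ne_zero, and_false, if_false,
    add_tsub_cancel_right, div_eq_mul_inv, mul_inv]
  ring

theorem integral_exp_mul_ztpLaplace_pow (lam : ℝ) (m p : ℕ) :
    ∫ x in Ioi 0, exp (-(2 * ((m + 1 : ℕ) : ℝ) * x)) * ztpLaplace lam x ^ p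
      = (exp (-lam) / (1 - exp (-lam))) ^ p *
          ∫ y in (0 : ℝ)..1, y ^ (2 * m + 1) * (exp (lam * y) - 1) ^ p := by
  rw [← intervalIntegral.integral_const_mul, ← integral_Ioi_exp_neg_mul_comp]
  refine setIntegral_congr_fun measurableSet_Ioi fun x _ => ?_
  have hexp : exp (-(2 * ((m + 1 : ℕ) : ℝ) * x)) = exp (-x) * exp (-x) ^ (2 * m + 1) := by
    rw [← exp_nat_mul, ← exp_add]
    push_cast
    ring_nf
  rw [hexp, ztpLaplace, mul_pow]
  ring

theorem expectation_g_diag_general (lam : ℝ) (n : ℕ) (hn : 2 ≤ n) :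
    ∑' k : ℕ, (∫ x in Set.Ioi (0 : ℝ),
          Real.exp (-(2 * (k : ℝ) * x)) * (ztpLaplace lam x) ^ (n - 2)) *
        ztpPmf lam k * sizeBiasedPmf lam k
      = (Real.exp (-(n : ℝ) * lam) / (1 - Real.exp (-lam)) ^ (n - 1)) *
          ∫ y in (0 : ℝ)..1, besselI1 (2 * lam * y) * (Real.exp (lam * y) - 1) ^ (n - 2) := by
  obtain ⟨p, rfl⟩ : ∃ p, n = p + 2 := ⟨n - 2, by omega⟩
  have hprefactor : exp (-((p + 2 : ℕ) : ℝ) * lam) = exp (-lam) ^ (p + 2) := by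
    rw [← exp_nat_mul]
    ring_nf
  have hterm (m : ℕ) :
      (∫ x in Ioi 0, exp (-(2 * ((m + 1 : ℕ) : ℝ) * x)) * ztpLaplace lam x ^ p) *
          ztpPmf lam (m + 1) * sizeBiasedPmf lam (m + 1)
        = exp (-lam) ^ (p + 2) / (1 - exp (-lam)) ^ (p + 1) *
          (lam ^ (2 * m + 1) / (m ! * (m + 1)! : ℝ) *
            ∫ y in (0 : ℝ)..1, y ^ (2 * m + 1) * (exp (lam * y) - 1) ^ p) := by
    rw [mul_assoc, integral_exp_mul_ztpLaplace_pow, ztpPmf_succ_mul_sizeBiasedPmf_succ]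
    generalize 1 - exp (-lam) = D
    ring
  have hzero : ztpPmf lam 0 = 0 := if_pos rfl
  rw [show p + 2 - 2 = p from rfl, show p + 2 - 1 = p + 1 from rfl, hprefactor]
  refine ((hasSum_nat_add_iff' 1).mp ?_).tsum_eq
  simp only [Finset.sum_range_one, hzero, mul_zero, zero_mul, sub_zero, hterm]
  exact (hasSum_integral_besselI1_mul lam (g := fun y => (exp (lam * y) - 1) ^ p)
    (by fun_prop)).mul_left _

/-- E[g(X*, X) 𝟙{X = X*}] in the ZTP(λ) bias analysis:
∑_{k=1}^∞ ( ∫₀^∞ e^{−2kx} L_λ(x)^{n−2} dx ) P_λ(k) P*_λ(k)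
  = (e^{−nλ}/(1−e^{−λ})^{n−1}) ∫₀^1 I₁(2λy)(e^{λy}−1)^{n−2} dy. -/
theorem expectation_g_diag (lam : ℝ) (hlam : 0 < lam) (n : ℕ) (hn : 2 ≤ n) :
    ∑' k : ℕ, (∫ x in Set.Ioi (0 : ℝ),
          Real.exp (-(2 * (k : ℝ) * x)) * (ztpLaplace lam x) ^ (n - 2)) *
        ztpPmf lam k * sizeBiasedPmf lam k
      = (Real.exp (-(n : ℝ) * lam) / (1 - Real.exp (-lam)) ^ (n - 1)) *
          ∫ y in (0 : ℝ)..1, besselI1 (2 * lam * y) * (Real.exp (lam * y) - 1) ^ (n - 2) :=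
  expectation_g_diag_general lam n hn
end
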